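/- Every locally finite simple graph G (i.e., every vertex has only finitely many neighbours) admits an orientation D such that there is no injective sequence (v_n)_{n∈ℕ} of vertices with (v_n, v_{n+1}) an edge of D for every n ∈ ℕ, and no injective sequence (v_n)_{n∈ℕ} of vertices with (v_{n+1}, v_n) an edge of D for every n ∈ ℕ. -/
import Mathlib

lemma ball_finite {V : Type*} (G : SimpleGraph V)
    (hlf : ∀ v : V, (G.neighborSet v).Finite) (c : V) :
    ∀ k : ℕ, {x | G.Reachable c x ∧ G.dist c x ≤ k}.Finite := by
  intro k
  induction k with
  | zero =>
    apply Set.Finite.subset (Set.finite_singleton c)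
    rintro x ⟨hr, hd⟩
    have : G.dist c x = 0 := Nat.le_zero.mp hd
    simp [hr.dist_eq_zero_iff.mp this]
  | succ k ih =>
    have : {x | G.Reachable c x ∧ G.dist c x ≤ k + 1} ⊆
        {x | G.Reachable c x ∧ G.dist c x ≤ k} ∪
        ⋃ y ∈ {x | G.Reachable c x ∧ G.dist c x ≤ k}, G.neighborSet y := by
      rintro x ⟨hr, hd⟩
      rcases Nat.lt_or_ge (G.dist c x) (k + 1) with h | h
      · exact Or.inl ⟨hr, Nat.lt_succ_iff.mp h⟩
      · have hdx : G.dist c x = k + 1 := le_antisymm hd h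
        obtain ⟨p, hp⟩ := hr.exists_walk_length_eq_dist
        have hlen : p.reverse.length = k + 1 := by simp [hp, hdx]
        cases hq : p.reverse with
        | nil => rw [hq] at hlen; simp at hlen
        | cons h₁ q =>
          rename_i y
          right
          have hylen : q.reverse.length = k := by
            have := hlen
            rw [hq] at this
            simpa using Nat.succ_injective this
          have hry : G.Reachable c y := ⟨q.reverse⟩
          have hdy : G.dist c y ≤ k := hylen ▸ G.dist_le q.reverse
          refine Set.mem_biUnion (show y ∈ _ from ⟨hry, hdy⟩) ?_
          exact h₁.symm
    exact Set.Finite.subset (ih.union (ih.biUnion (fun y _ => hlf y))) this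

lemma eventually_const {e : ℕ → ℕ} (p : ℕ → Prop)
    (h1 : ∀ n, ¬ p (e n) → e (n + 1) = e n)
    (h2 : ∀ n, p (e n) → e (n + 1) = e n ∨ ¬ p (e (n + 1))) :
    ∃ N, ∀ n, N ≤ n → e n = e N := by
  by_cases hx : ∃ N, ¬ p (e N)
  · obtain ⟨N, hN⟩ := hx
    refine ⟨N, fun n hn => ?_⟩
    induction n with
    | zero =>
      have : N = 0 := Nat.le_zero.mp hn
      rw [this]
    | succ m ihm =>
      rcases Nat.lt_or_ge N (m + 1) with h | h
      · have hm : N ≤ m := Nat.lt_succ_iff.mp h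
        have hem := ihm hm
        have : ¬ p (e m) := hem ▸ hN
        rw [h1 m this, hem]
      · have : N = m + 1 := le_antisymm hn h
        rw [this]
  · push_neg at hx
    refine ⟨0, fun n _ => ?_⟩
    induction n with
    | zero => rfl
    | succ m ihm =>
      rcases h2 m (hx m) with h | h
      · rw [h, ihm (Nat.zero_le m)]
      · exact absurd (hx (m + 1)) h

/-- An orientation of a simple graph `G`: an asymmetric relation `D` whose
symmetrization is exactly the adjacency relation of `G`. -/
def IsOrientation {V : Type*} (G : SimpleGraph V) (D : V → V → Prop) : Prop :=
  (∀ u v, ¬ (D u v ∧ D v u)) ∧ ∀ u v, G.Adj u v ↔ (D u v ∨ D v u)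

/-- A digraph structure on a relation: no loops and no pairs of opposite arcs. -/
def IsDigraph {W : Type*} (E : W → W → Prop) : Prop :=
  ∀ u v, ¬ (E u v ∧ E v u)

/-- `G ⇒ E`: every orientation `D` of `G` contains an isometric copy of the digraph `E`:
an injective map `f` inducing an isomorphism onto its image, preserving orientations,
such that distances (in the underlying undirected graphs) are preserved. -/
def IsoRamseyArrow {V W : Type*} (G : SimpleGraph V) (E : W → W → Prop) : Prop :=
  ∀ D : V → V → Prop, IsOrientation G D →
    ∃ f : W → V, Function.Injective f ∧
      (∀ u v, E u v ↔ D (f u) (f v)) ∧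
      (∀ u v, (SimpleGraph.fromRel E).edist u v = G.edist (f u) (f v))

theorem stmt19 (V : Type*) (G : SimpleGraph V)
    (hlf : ∀ v : V, (G.neighborSet v).Finite) :
    ∃ D : V → V → Prop, IsOrientation G D ∧
      (¬ ∃ v : ℕ → V, Function.Injective v ∧ ∀ n, D (v n) (v (n + 1))) ∧
      (¬ ∃ v : ℕ → V, Function.Injective v ∧ ∀ n, D (v (n + 1)) (v n)) := by
  classical
  letI : LinearOrder V := linearOrderOfSTO WellOrderingRel
  set r : V → V := fun v => (G.connectedComponentMk v).out with hr_def
  set d : V → ℕ := fun v => G.dist (r v) v with hd_def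
  have hreach : ∀ v, G.Reachable (r v) v :=
    fun v => SimpleGraph.ConnectedComponent.exact (Quot.out_eq _)
  have hr_adj : ∀ u v, G.Adj u v → r u = r v := by
    intro u v h
    simp only [hr_def]
    rw [SimpleGraph.ConnectedComponent.sound h.reachable]
  have hdist_adj : ∀ u v, G.Adj u v → d v ≤ d u + 1 := by
    intro u v h
    obtain ⟨p, hp⟩ := (hreach u).exists_walk_length_eq_dist
    have : G.dist (r u) v ≤ d u + 1 := by
      calc G.dist (r u) v ≤ (p.concat h).length := SimpleGraph.dist_le _
        _ = d u + 1 := by rw [SimpleGraph.Walk.length_concat, hp]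
    rw [hr_adj u v h] at this
    exact this
  set D : V → V → Prop := fun u v => G.Adj u v ∧
      ((d u < d v ∧ Even (d u)) ∨ (d v < d u ∧ Odd (d v)) ∨ (d u = d v ∧ u < v))
    with hD_def
  have hmove : ∀ a b, D a b →
      (d b = d a + 1 ∧ Even (d a)) ∨ (d a = d b + 1 ∧ Odd (d b)) ∨ d a = d b := by
    rintro a b ⟨hadj, hcase⟩
    have h1 := hdist_adj a b hadj
    have h2 := hdist_adj b a hadj.symm
    rcases hcase with ⟨hlt, he⟩ | ⟨hlt, ho⟩ | ⟨heq, _⟩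
    · exact Or.inl ⟨by omega, he⟩
    · exact Or.inr (Or.inl ⟨by omega, ho⟩)
    · exact Or.inr (Or.inr heq)
  refine ⟨D, ⟨?_, ?_⟩, ?_, ?_⟩
  · -- asymmetry
    rintro u v ⟨⟨_, h1⟩, ⟨_, h2⟩⟩
    rcases h1 with ⟨hlt, hpar⟩ | ⟨hlt, hpar⟩ | ⟨heq, hlt⟩ <;>
      rcases h2 with ⟨hlt', hpar'⟩ | ⟨hlt', hpar'⟩ | ⟨heq', hlt'⟩
    all_goals first
      | omega
      | (obtain ⟨a, ha⟩ := hpar; obtain ⟨b, hb⟩ := hpar'; omega)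
      | exact absurd hlt' (asymm hlt)
  · -- totality
    intro u v
    constructor
    · intro hadj
      rcases Nat.lt_trichotomy (d u) (d v) with h | h | h
      · rcases Nat.even_or_odd (d u) with hp | hp
        · exact Or.inl ⟨hadj, Or.inl ⟨h, hp⟩⟩
        · exact Or.inr ⟨hadj.symm, Or.inr (Or.inl ⟨h, hp⟩)⟩
      · rcases lt_trichotomy u v with h' | h' | h'
        · exact Or.inl ⟨hadj, Or.inr (Or.inr ⟨h, h'⟩)⟩
        · exact absurd h' hadj.ne
        · exact Or.inr ⟨hadj.symm, Or.inr (Or.inr ⟨h.symm, h'⟩)⟩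
      · rcases Nat.even_or_odd (d v) with hp | hp
        · exact Or.inr ⟨hadj.symm, Or.inl ⟨h, hp⟩⟩
        · exact Or.inl ⟨hadj, Or.inr (Or.inl ⟨h, hp⟩)⟩
    · rintro (⟨h, _⟩ | ⟨h, _⟩)
      · exact h
      · exact h.symm
  · -- no forward ray
    rintro ⟨v, hinj, hpath⟩
    have hadj : ∀ n, G.Adj (v n) (v (n + 1)) := fun n => (hpath n).1
    have hroot : ∀ n, r (v n) = r (v 0) := by
      intro n
      induction n with
      | zero => rfl
      | succ m ihm => rw [← hr_adj _ _ (hadj m), ihm]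
    obtain ⟨N, hN⟩ := eventually_const (e := fun n => d (v n)) Even
      (by
        intro n hodd
        have hodd' : Odd (d (v n)) := by
          rwa [Nat.not_even_iff_odd] at hodd
        show d (v (n + 1)) = d (v n)
        rcases hmove _ _ (hpath n) with ⟨h, hp⟩ | ⟨h, hp⟩ | h
        · exact absurd hp (Nat.not_even_iff_odd.mpr hodd')
        · obtain ⟨a, ha⟩ := hodd'; obtain ⟨b, hb⟩ := hp; omega
        · exact h.symm)
      (by
        intro n hev
        have hev' : Even (d (v n)) := hev
        show d (v (n + 1)) = d (v n) ∨ ¬ Even (d (v (n + 1)))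
        rcases hmove _ _ (hpath n) with ⟨h, hp⟩ | ⟨h, hp⟩ | h
        · right; rw [Nat.not_even_iff_odd, h]; exact hp.add_one
        · right; rw [Nat.not_even_iff_odd]; exact hp
        · exact Or.inl h.symm)
    have hfin := ball_finite G hlf (r (v 0)) (d (v N))
    have hsub : Set.range (fun n => v (N + n)) ⊆
        {x | G.Reachable (r (v 0)) x ∧ G.dist (r (v 0)) x ≤ d (v N)} := by
      rintro x ⟨n, rfl⟩
      have h1 : r (v (N + n)) = r (v 0) := hroot (N + n)
      have h2 : d (v (N + n)) = d (v N) := hN (N + n) (Nat.le_add_right N n)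
      refine ⟨h1 ▸ hreach (v (N + n)), ?_⟩
      have : G.dist (r (v (N + n))) (v (N + n)) = d (v N) := h2
      rw [← h1]
      exact le_of_eq this
    have hinf : (Set.range (fun n => v (N + n))).Infinite :=
      Set.infinite_range_of_injective (fun a b hab => by
        have := hinj hab; omega)
    exact hinf (hfin.subset hsub)
  · -- no backward ray
    rintro ⟨v, hinj, hpath⟩
    have hadj : ∀ n, G.Adj (v n) (v (n + 1)) := fun n => ((hpath n).1).symm
    have hroot : ∀ n, r (v n) = r (v 0) := by
      intro n
      induction n with
      | zero => rfl
      | succ m ihm => rw [← hr_adj _ _ (hadj m), ihm]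
    obtain ⟨N, hN⟩ := eventually_const (e := fun n => d (v n)) Odd
      (by
        intro n hev
        have hev' : Even (d (v n)) := by
          rwa [Nat.not_odd_iff_even] at hev
        show d (v (n + 1)) = d (v n)
        rcases hmove _ _ (hpath n) with ⟨h, hp⟩ | ⟨h, hp⟩ | h
        · obtain ⟨a, ha⟩ := hev'; obtain ⟨b, hb⟩ := hp; omega
        · exact absurd hp (Nat.not_odd_iff_even.mpr hev')
        · exact h)
      (by
        intro n hodd
        have hodd' : Odd (d (v n)) := hodd
        show d (v (n + 1)) = d (v n) ∨ ¬ Odd (d (v (n + 1)))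
        rcases hmove _ _ (hpath n) with ⟨h, hp⟩ | ⟨h, hp⟩ | h
        · right; rw [Nat.not_odd_iff_even]; exact hp
        · right; rw [Nat.not_odd_iff_even, h]; exact hodd'.add_one
        · exact Or.inl h)
    have hfin := ball_finite G hlf (r (v 0)) (d (v N))
    have hsub : Set.range (fun n => v (N + n)) ⊆
        {x | G.Reachable (r (v 0)) x ∧ G.dist (r (v 0)) x ≤ d (v N)} := by
      rintro x ⟨n, rfl⟩
      have h1 : r (v (N + n)) = r (v 0) := hroot (N + n)
      have h2 : d (v (N + n)) = d (v N) := hN (N + n) (Nat.le_add_right N n)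
      refine ⟨h1 ▸ hreach (v (N + n)), ?_⟩
      have : G.dist (r (v (N + n))) (v (N + n)) = d (v N) := h2
      rw [← h1]
      exact le_of_eq this
    have hinf : (Set.range (fun n => v (N + n))).Infinite :=
      Set.infinite_range_of_injective (fun a b hab => by
        have := hinj hab; omega)
    exact hinf (hfin.subset hsub)
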